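/- arXiv:2209.13253 — 2 statements merged into one kernel-verified Lean document; each statement's English description precedes it below -/
import Mathlib

section
/- Let X = ℕ with the cofinite topology. Then the convergence class S_X is topological (it coincides with convergence in the discrete topology on ℕ), but X is not a directed space. -/
namespace Conv

variable {X : Type}

/-- A directed preorder (index of a net), given as an explicit relation. -/
def DirIdx {I : Type} (r : I → I → Prop) : Prop :=
  Nonempty I ∧ (∀ i, r i i) ∧ (∀ a b c : I, r a b → r b c → r a c) ∧
    ∀ a b : I, ∃ c, r a c ∧ r b c

/-- Specialization order relative to a family `T` of "open" sets. -/
def sle (T : Set (Set X)) (x y : X) : Prop := ∀ U ∈ T, x ∈ U → y ∈ U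

/-- Upper closure of a set w.r.t. the specialization order of `T`. -/
def upset (T : Set (Set X)) (A : Set X) : Set X := {z | ∃ a ∈ A, sle T a z}

/-- `D` is a (nonempty) directed subset w.r.t. the specialization order of `T`. -/
def IsDirSet (T : Set (Set X)) (D : Set X) : Prop := D.Nonempty ∧ DirectedOn (sle T) D

/-- A subset `D` (viewed as a monotone net) converges to `x` w.r.t. `T`. -/
def DConv (T : Set (Set X)) (D : Set X) (x : X) : Prop :=
  ∀ U ∈ T, x ∈ U → (D ∩ U).Nonempty

/-- `U` is directed-open w.r.t. `T`. -/
def DirOpen (T : Set (Set X)) (U : Set X) : Prop :=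
  ∀ D x, IsDirSet T D → DConv T D x → x ∈ U → (D ∩ U).Nonempty

/-- The family of directed-open sets. -/
def DTop (T : Set (Set X)) : Set (Set X) := {U | DirOpen T U}

/-- The family of open sets of a topological space. -/
def opens (X : Type) [TopologicalSpace X] : Set (Set X) := {U | IsOpen U}

/-- Every directed-open set belongs to `T`. -/
def DirT (T : Set (Set X)) : Prop := ∀ U, DirOpen T U → U ∈ T

/-- A directed space: every directed-open set is open. -/
def IsDirectedSpace (X : Type) [TopologicalSpace X] : Prop := DirT (opens X)

/-- A net is eventually in `U`. -/
def EvIn {I : Type} (r : I → I → Prop) (xi : I → X) (U : Set X) : Prop :=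
  ∃ k, ∀ i, r k i → xi i ∈ U

/-- `y` is an eventual lower bound of the net `xi`. -/
def EvLB (T : Set (Set X)) {I : Type} (r : I → I → Prop) (xi : I → X) (y : X) : Prop :=
  ∃ k, ∀ i, r k i → sle T y (xi i)

/-- Topological convergence of a net w.r.t. the family `T` of open sets. -/
def NConv (T : Set (Set X)) {I : Type} (r : I → I → Prop) (xi : I → X) (x : X) : Prop :=
  ∀ U ∈ T, x ∈ U → EvIn r xi U

/-- `((x_i), x) ∈ S_X`: some directed set of eventual lower bounds converges to `x`. -/
def SConv (T : Set (Set X)) {I : Type} (r : I → I → Prop) (xi : I → X) (x : X) : Prop :=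
  ∃ D : Set X, IsDirSet T D ∧ (∀ d ∈ D, EvLB T r xi d) ∧ DConv T D x

/-- `U` is open in the topology determined by `S_X`. -/
def SOpen (T : Set (Set X)) (U : Set X) : Prop :=
  ∀ (I : Type) (r : I → I → Prop), DirIdx r → ∀ (xi : I → X) (x : X),
    SConv T r xi x → x ∈ U → EvIn r xi U

/-- `y ≪_d x`. -/
def WayBelow (T : Set (Set X)) (y x : X) : Prop :=
  ∀ D : Set X, IsDirSet T D → DConv T D x → ∃ d ∈ D, sle T y d

/-- A continuous space (relative to the family `T`). -/
def IsContinuousT (T : Set (Set X)) : Prop :=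
  DirT T ∧ ∀ x : X, IsDirSet T {y | WayBelow T y x} ∧ DConv T {y | WayBelow T y x} x

def IsContinuousSpace (X : Type) [TopologicalSpace X] : Prop := IsContinuousT (opens X)

/-- `G ≪_d H` for subsets. -/
def SWayBelow (T : Set (Set X)) (G H : Set X) : Prop :=
  ∀ (D : Set X) (x : X), IsDirSet T D → DConv T D x → x ∈ H → (D ∩ upset T G).Nonempty

/-- A directed family of finite sets (ordered by reverse inclusion of upper closures). -/
def IsDirFam (T : Set (Set X)) (F : Set (Set X)) : Prop :=
  F.Nonempty ∧ (∀ A ∈ F, A.Finite) ∧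
    ∀ A ∈ F, ∀ B ∈ F, ∃ C ∈ F, upset T C ⊆ upset T A ∧ upset T C ⊆ upset T B

/-- Convergence of a family of finite sets to `x`. -/
def FamConv (T : Set (Set X)) (F : Set (Set X)) (x : X) : Prop :=
  ∀ U ∈ T, x ∈ U → ∃ A ∈ F, upset T A ⊆ U

/-- `fin_d(x)`. -/
def finD (T : Set (Set X)) (x : X) : Set (Set X) := {A | A.Finite ∧ SWayBelow T A {x}}

def IsQuasicontinuousT (T : Set (Set X)) : Prop :=
  DirT T ∧ ∀ x : X, IsDirFam T (finD T x) ∧ FamConv T (finD T x) x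

def IsQuasicontinuousSpace (X : Type) [TopologicalSpace X] : Prop :=
  IsQuasicontinuousT (opens X)

/-- `A` is a quasi eventual lower bound of the net `xi`. -/
def QEvLB (T : Set (Set X)) {I : Type} (r : I → I → Prop) (xi : I → X) (A : Set X) : Prop :=
  A.Finite ∧ ∃ k, ∀ i, r k i → xi i ∈ upset T A

/-- `((x_i), x) ∈ S*_X`. -/
def QSConv (T : Set (Set X)) {I : Type} (r : I → I → Prop) (xi : I → X) (x : X) : Prop :=
  ∃ F : Set (Set X), IsDirFam T F ∧ (∀ A ∈ F, QEvLB T r xi A) ∧ FamConv T F x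

/-- `U` is open in the topology determined by `S*_X`. -/
def QSOpen (T : Set (Set X)) (U : Set X) : Prop :=
  ∀ (I : Type) (r : I → I → Prop), DirIdx r → ∀ (xi : I → X) (x : X),
    QSConv T r xi x → x ∈ U → EvIn r xi U

/-- `x ≡ liminf x_i`. -/
def IsLiminf (T : Set (Set X)) {I : Type} (r : I → I → Prop) (xi : I → X) (x : X) : Prop :=
  (∀ y, EvLB T r xi y → sle T y x) ∧
  (∀ z, (∀ y, EvLB T r xi y → sle T y z) → sle T x z) ∧
  SConv T r xi x

/-- `f : (J,s) → (I,r)` is a subnet map: monotone and cofinal, with directed domain. -/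
def Subnet {I J : Type} (r : I → I → Prop) (s : J → J → Prop) (f : J → I) : Prop :=
  DirIdx s ∧ (∀ a b, s a b → r (f a) (f b)) ∧ ∀ i, ∃ j, r i (f j)

/-- `z` is a cofinal lower bound of the net `xi`. -/
def CofLB (T : Set (Set X)) {I : Type} (r : I → I → Prop) (xi : I → X) (z : X) : Prop :=
  ∀ i, ∃ j, r i j ∧ sle T z (xi j)

/-- `((x_i), x) ∈ L_X`: every subnet has liminf `x`. -/
def LConv (T : Set (Set X)) {I : Type} (r : I → I → Prop) (xi : I → X) (x : X) : Prop :=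
  ∀ (J : Type) (s : J → J → Prop) (f : J → I), Subnet r s f →
    IsLiminf T s (fun j => xi (f j)) x

/-- `U` is open in the liminf topology `L(X)`. -/
def LOpen (T : Set (Set X)) (U : Set X) : Prop :=
  ∀ (I : Type) (r : I → I → Prop), DirIdx r → ∀ (xi : I → X) (x : X),
    LConv T r xi x → x ∈ U → EvIn r xi U

/-- `x ≡_q liminf x_i`. -/
def QLiminf (T : Set (Set X)) {I : Type} (r : I → I → Prop) (xi : I → X) (x : X) : Prop :=
  QSConv T r xi x ∧ ∀ y, EvLB T r xi y → sle T y x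

/-- `((x_i), x) ∈ L*_X`: every subnet quasi-liminf converges to `x`. -/
def QLConv (T : Set (Set X)) {I : Type} (r : I → I → Prop) (xi : I → X) (x : X) : Prop :=
  ∀ (J : Type) (s : J → J → Prop) (f : J → I), Subnet r s f →
    QLiminf T s (fun j => xi (f j)) x

/-- `U` is open in the quasi-liminf topology `L*(X)`. -/
def QLOpen (T : Set (Set X)) (U : Set X) : Prop :=
  ∀ (I : Type) (r : I → I → Prop), DirIdx r → ∀ (xi : I → X) (x : X),
    QLConv T r xi x → x ∈ U → EvIn r xi U

/-- The Lawson topology: generated by the opens of `X` and complements of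
principal upper sets. -/
def lawson (X : Type) [TopologicalSpace X] : Set (Set X) :=
  {U | (TopologicalSpace.generateFrom
      (opens X ∪ {V | ∃ y : X, V = {z : X | sle (opens X) y z}ᶜ})).IsOpen U}

/-! In a T1 space the specialization order is equality, so directed sets are singletons and a
singleton `{d}` converges to `x` only when `d = x`. Hence `S_X`-convergence is eventual constancy,
and every subset is both `S_X`-open and directed-open: both derived topologies are discrete. The
cofinite topology on `ℕ` is T1 but not discrete, so it is not a directed space. -/

lemma dConv_singleton_iff (T : Set (Set X)) (d x : X) : DConv T {d} x ↔ sle T x d := by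
  simp [DConv, sle]

lemma sle_refl (T : Set (Set X)) (x : X) : sle T x x := fun _ _ h => h

lemma isDirSet_singleton (T : Set (Set X)) (x : X) : IsDirSet T {x} := by
  refine ⟨Set.singleton_nonempty x, ?_⟩
  rintro _ rfl _ rfl
  exact ⟨_, rfl, sle_refl T _, sle_refl T _⟩

lemma sConv_of_eventually_eq (T : Set (Set X)) {I : Type} {r : I → I → Prop} {xi : I → X}
    {x : X} (h : ∃ k, ∀ i, r k i → xi i = x) : SConv T r xi x := by
  obtain ⟨k, hk⟩ := h
  refine ⟨{x}, isDirSet_singleton T x, ?_, (dConv_singleton_iff T x x).2 (sle_refl T x)⟩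
  rintro d rfl
  exact ⟨k, fun i hi => hk i hi ▸ sle_refl T _⟩

lemma nConv_of_eventually_eq (T : Set (Set X)) {I : Type} {r : I → I → Prop} {xi : I → X}
    {x : X} (h : ∃ k, ∀ i, r k i → xi i = x) : NConv T r xi x := by
  obtain ⟨k, hk⟩ := h
  exact fun U _ hx => ⟨k, fun i hi => hk i hi ▸ hx⟩

section T1

variable [TopologicalSpace X] [T1Space X]

lemma sle_opens_iff_eq {x y : X} : sle (opens X) x y ↔ x = y := by
  rw [eq_comm, ← specializes_iff_eq, specializes_iff_forall_open]
  rfl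

lemma IsDirSet.eq_singleton_of_t1Space {D : Set X} (hD : IsDirSet (opens X) D) :
    ∃ d, D = {d} := by
  obtain ⟨⟨d, hd⟩, hdir⟩ := hD
  refine ⟨d, Set.eq_singleton_iff_unique_mem.2 ⟨hd, fun b hb => ?_⟩⟩
  obtain ⟨c, -, hbc, hdc⟩ := hdir b hb d hd
  exact (sle_opens_iff_eq.1 hbc).trans (sle_opens_iff_eq.1 hdc).symm

lemma IsDirSet.eq_singleton_of_dConv {D : Set X} {x : X} (hD : IsDirSet (opens X) D)
    (hconv : DConv (opens X) D x) : D = {x} := by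
  obtain ⟨d, rfl⟩ := hD.eq_singleton_of_t1Space
  rw [sle_opens_iff_eq.1 ((dConv_singleton_iff _ d x).1 hconv)]

lemma sConv_opens_iff {I : Type} {r : I → I → Prop} {xi : I → X} {x : X} :
    SConv (opens X) r xi x ↔ ∃ k, ∀ i, r k i → xi i = x := by
  refine ⟨?_, sConv_of_eventually_eq _⟩
  rintro ⟨D, hD, hlb, hconv⟩
  obtain rfl := hD.eq_singleton_of_dConv hconv
  obtain ⟨k, hk⟩ := hlb x rfl
  exact ⟨k, fun i hi => (sle_opens_iff_eq.1 (hk i hi)).symm⟩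

lemma sOpen_opens (U : Set X) : SOpen (opens X) U := by
  intro I r _ xi x hS hx
  obtain ⟨k, hk⟩ := sConv_opens_iff.1 hS
  exact ⟨k, fun i hi => hk i hi ▸ hx⟩

lemma nConv_sOpen_iff {I : Type} {r : I → I → Prop} {xi : I → X} {x : X} :
    NConv {U | SOpen (opens X) U} r xi x ↔ ∃ k, ∀ i, r k i → xi i = x :=
  ⟨fun h => h {x} (sOpen_opens {x}) rfl, nConv_of_eventually_eq _⟩

lemma dirOpen_opens (U : Set X) : DirOpen (opens X) U := by
  intro D x hD hconv hx
  rw [hD.eq_singleton_of_dConv hconv, Set.singleton_inter_nonempty]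
  exact hx

lemma isDirectedSpace_iff_discreteTopology : IsDirectedSpace X ↔ DiscreteTopology X :=
  ⟨fun h => discreteTopology_iff_forall_isOpen.2 fun U => h U (dirOpen_opens U),
    fun _ U _ => isOpen_discrete U⟩

end T1

lemma CofiniteTopology.not_discreteTopology {α : Type} [Infinite α] :
    ¬ DiscreteTopology (CofiniteTopology α) := by
  intro h
  obtain ⟨a⟩ := (inferInstance : Nonempty α)
  have hfin := CofiniteTopology.isOpen_iff.1
    (isOpen_discrete ({CofiniteTopology.of a} : Set (CofiniteTopology α))) ⟨_, rfl⟩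
  exact (Set.finite_singleton _).infinite_compl hfin

theorem stmt9 :
    (∀ (I : Type) (r : I → I → Prop), DirIdx r →
      ∀ (xi : I → CofiniteTopology ℕ) (x : CofiniteTopology ℕ),
        SConv (opens (CofiniteTopology ℕ)) r xi x ↔
          (∃ k, ∀ i, r k i → xi i = x)) ∧
    (∀ (I : Type) (r : I → I → Prop), DirIdx r →
      ∀ (xi : I → CofiniteTopology ℕ) (x : CofiniteTopology ℕ),
        SConv (opens (CofiniteTopology ℕ)) r xi x ↔
          NConv {U | SOpen (opens (CofiniteTopology ℕ)) U} r xi x) ∧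
    ¬ IsDirectedSpace (CofiniteTopology ℕ) := by
  refine ⟨fun _ _ _ _ _ => sConv_opens_iff,
    fun _ _ _ _ _ => sConv_opens_iff.trans nConv_sOpen_iff.symm, ?_⟩
  rw [isDirectedSpace_iff_discreteTopology]
  exact CofiniteTopology.not_discreteTopology

end Conv
end

section
/- Let X be a quasicontinuous space. Then ((x_i), x) ∈ S*_X if and only if the net (x_i) converges topologically to x. In particular, S*_X-convergence is topological. -/
namespace Conv

variable {X : Type}

lemma sle_trans {T : Set (Set X)} {x y z : X} (h₁ : sle T x y) (h₂ : sle T y z) : sle T x z :=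
  fun U hU hx => h₂ U hU (h₁ U hU hx)

lemma mem_upset_of_mem {T : Set (Set X)} {A : Set X} {a : X} (ha : a ∈ A) : a ∈ upset T A :=
  ⟨a, ha, sle_refl T a⟩

lemma mem_upset_of_sle {T : Set (Set X)} {A : Set X} {y z : X} (hy : y ∈ upset T A)
    (h : sle T y z) : z ∈ upset T A :=
  let ⟨a, ha, hay⟩ := hy
  ⟨a, ha, sle_trans hay h⟩

def IsLowerSetT (T : Set (Set X)) (C : Set X) : Prop := ∀ ⦃y c⦄, sle T y c → c ∈ C → y ∈ C

def MeetsAll (S : Set (Set X)) (C : Set X) : Prop := ∀ G ∈ S, (C ∩ G).Nonempty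

lemma isLowerSetT_compl_upset (T : Set (Set X)) (A : Set X) : IsLowerSetT T (upset T A)ᶜ :=
  fun _ _ hyc hc hy => hc (mem_upset_of_sle hy hyc)

lemma dConv_of_meetsAll {T : Set (Set X)} {S : Set (Set X)} {C : Set X} {z : X}
    (hS : FamConv T S z) (hC : MeetsAll S C) : DConv T C z := by
  intro U hU hzU
  obtain ⟨G, hG, hGU⟩ := hS U hU hzU
  obtain ⟨g, hgC, hgG⟩ := hC G hG
  exact ⟨g, hgC, hGU (mem_upset_of_mem hgG)⟩

lemma sInter_inter_nonempty_of_isChain {α : Type*} {c : Set (Set α)} (hc : IsChain (· ⊆ ·) c)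
    (hne : c.Nonempty) {G : Set α} (hG : G.Finite) (h : ∀ C ∈ c, (C ∩ G).Nonempty) :
    (⋂₀ c ∩ G).Nonempty := by
  by_contra hempty
  have hcover : G ⊆ ⋃₀ (compl '' c) := by
    intro g hg
    have hgc : g ∉ ⋂₀ c := fun hgc => hempty ⟨g, hgc, hg⟩
    simpa only [Set.mem_sInter, not_forall, Set.sUnion_image, Set.mem_iUnion, Set.mem_compl_iff,
      exists_prop] using hgc
  have hdir : DirectedOn (· ⊆ ·) (compl '' c) :=
    (hc.symm.image_of_map_rel _ _ _ fun _ _ h => Set.compl_subset_compl.2 h).directedOn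
  obtain ⟨_, ⟨C, hC, rfl⟩, hGC⟩ :=
    hdir.exists_mem_subset_of_finite_of_subset_sUnion (hne.image _) hG hcover
  obtain ⟨g, hgC, hgG⟩ := h C hC
  exact hGC hgG hgC

section Rudin

variable {T : Set (Set X)} {S : Set (Set X)}

lemma exists_minimal_isLowerSetT_meetsAll (hfin : ∀ G ∈ S, G.Finite) {L : Set X}
    (hL : IsLowerSetT T L) (hLS : MeetsAll S L) :
    ∃ C ⊆ L, Minimal (fun C => IsLowerSetT T C ∧ MeetsAll S C) C := by
  refine zorn_superset_nonempty {C | IsLowerSetT T C ∧ MeetsAll S C} ?_ L ⟨hL, hLS⟩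
  intro c hc hchain hne
  refine ⟨⋂₀ c, ⟨?_, ?_⟩, fun C hC => Set.sInter_subset_of_mem hC⟩
  · exact fun y x hyx hx => Set.mem_sInter.2 fun C hC => (hc hC).1 hyx (Set.mem_sInter.1 hx C hC)
  · exact fun G hG => sInter_inter_nonempty_of_isChain hchain hne (hfin G hG)
      fun C hC => (hc hC).2 G hG

lemma directedOn_of_minimal_isLowerSetT_meetsAll (hS : IsDirFam T S) {C : Set X}
    (hC : Minimal (fun C => IsLowerSetT T C ∧ MeetsAll S C) C) : DirectedOn (sle T) C := by
  obtain ⟨⟨hlow, hmeet⟩, hmin⟩ := hC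
  -- by minimality, removing `↑x` from `C` destroys `MeetsAll S`, so some `G ∈ S` has `C ∩ G ⊆ ↑x`
  have hcontrol : ∀ x ∈ C, ∃ G ∈ S, ∀ g ∈ C ∩ G, sle T x g := by
    intro x hx
    by_contra! hfree
    have hsmaller : IsLowerSetT T (C ∩ {w | ¬ sle T x w}) ∧ MeetsAll S (C ∩ {w | ¬ sle T x w}) :=
      ⟨fun y c hyc hc => ⟨hlow hyc hc.1, fun hxy => hc.2 (sle_trans hxy hyc)⟩,
        fun G hG => let ⟨g, hgCG, hxg⟩ := hfree G hG; ⟨g, ⟨hgCG.1, hxg⟩, hgCG.2⟩⟩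
    exact (hmin hsmaller Set.inter_subset_left hx).2 (sle_refl T x)
  intro x₁ hx₁ x₂ hx₂
  obtain ⟨G₁, hG₁, hx₁G₁⟩ := hcontrol x₁ hx₁
  obtain ⟨G₂, hG₂, hx₂G₂⟩ := hcontrol x₂ hx₂
  obtain ⟨G, hG, hGG₁, hGG₂⟩ := hS.2.2 G₁ hG₁ G₂ hG₂
  obtain ⟨c, hcC, hcG⟩ := hmeet G hG
  obtain ⟨g₁, hg₁, hg₁c⟩ := hGG₁ (mem_upset_of_mem hcG)
  obtain ⟨g₂, hg₂, hg₂c⟩ := hGG₂ (mem_upset_of_mem hcG)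
  exact ⟨c, hcC, sle_trans (hx₁G₁ g₁ ⟨hlow hg₁c hcC, hg₁⟩) hg₁c,
    sle_trans (hx₂G₂ g₂ ⟨hlow hg₂c hcC, hg₂⟩) hg₂c⟩

theorem rudin_lemma (hS : IsDirFam T S) {L : Set X} (hL : IsLowerSetT T L)
    (hLS : MeetsAll S L) : ∃ C ⊆ L, IsDirSet T C ∧ MeetsAll S C := by
  obtain ⟨C, hCL, hC⟩ := exists_minimal_isLowerSetT_meetsAll hS.2.1 hL hLS
  obtain ⟨G, hG⟩ := hS.1
  exact ⟨C, hCL, ⟨(hC.1.2 G hG).mono Set.inter_subset_left,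
    directedOn_of_minimal_isLowerSetT_meetsAll hS hC⟩, hC.1.2⟩

end Rudin

lemma SWayBelow.mem_upset {T : Set (Set X)} {A : Set X} {z : X} (h : SWayBelow T A {z}) :
    z ∈ upset T A := by
  have hdir : IsDirSet T {z} :=
    ⟨Set.singleton_nonempty z, fun _ ha _ hb => ⟨z, rfl, ha ▸ sle_refl T z, hb ▸ sle_refl T z⟩⟩
  obtain ⟨_, rfl, hzA⟩ := h {z} z hdir (fun _ _ hz => ⟨z, rfl, hz⟩) rfl
  exact hzA

lemma SWayBelow.of_sle {T : Set (Set X)} {A : Set X} {d e : X} (h : SWayBelow T A {d})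
    (hde : sle T d e) : SWayBelow T A {e} := by
  rintro D _ hD hDe rfl
  exact h D d hD (fun U hU hd => hDe U hU (hde U hU hd)) rfl

section Quasicontinuous

variable {T : Set (Set X)}

lemma isDirFam_biUnion_finD (hq : IsQuasicontinuousT T) {D : Set X} (hD : IsDirSet T D) :
    IsDirFam T (⋃ d ∈ D, finD T d) := by
  simp only [IsDirFam, Set.mem_iUnion, exists_prop]
  refine ⟨?_, fun _ ⟨_, _, hG⟩ => hG.1, ?_⟩
  · obtain ⟨d, hd⟩ := hD.1
    obtain ⟨G, hG⟩ := (hq.2 d).1.1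
    exact ⟨G, Set.mem_biUnion hd hG⟩
  · rintro G₁ ⟨d₁, hd₁, hG₁⟩ G₂ ⟨d₂, hd₂, hG₂⟩
    obtain ⟨d, hd, hd₁d, hd₂d⟩ := hD.2 d₁ hd₁ d₂ hd₂
    obtain ⟨G, hG, hGG₁, hGG₂⟩ :=
      (hq.2 d).1.2.2 G₁ ⟨hG₁.1, hG₁.2.of_sle hd₁d⟩ G₂ ⟨hG₂.1, hG₂.2.of_sle hd₂d⟩
    exact ⟨G, ⟨d, hd, hG⟩, hGG₁, hGG₂⟩

lemma famConv_biUnion_finD (hq : IsQuasicontinuousT T) {D : Set X} {z : X} (hDz : DConv T D z) :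
    FamConv T (⋃ d ∈ D, finD T d) z := by
  intro U hU hzU
  obtain ⟨d, hd, hdU⟩ := hDz U hU hzU
  obtain ⟨G, hG, hGU⟩ := (hq.2 d).2 U hU hdU
  exact ⟨G, Set.mem_biUnion hd hG, hGU⟩

lemma dirOpen_setOf_sWayBelow (hq : IsQuasicontinuousT T) (A : Set X) : DirOpen T {z | SWayBelow T A {z}} := by
  intro D z hD hDz hAz
  by_contra hnone
  have hmeet : MeetsAll (⋃ d ∈ D, finD T d) (upset T A)ᶜ := by
    simp only [MeetsAll, Set.mem_iUnion, exists_prop]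
    rintro G ⟨d, hd, -, hGd⟩
    have hnot : ¬ SWayBelow T A {d} := fun h => hnone ⟨d, hd, h⟩
    simp only [SWayBelow, Set.mem_singleton_iff, not_forall, Set.not_nonempty_iff_eq_empty,
      exists_prop] at hnot
    obtain ⟨E, y, hE, hEy, hyd, hEA⟩ := hnot
    obtain ⟨e, heE, g, hgG, hge⟩ := hGd E y hE hEy hyd
    exact ⟨g, fun hgA => hEA.subset ⟨heE, mem_upset_of_sle hgA hge⟩, hgG⟩
  obtain ⟨C, hCA, hC, hCS⟩ :=
    rudin_lemma (isDirFam_biUnion_finD hq hD) (isLowerSetT_compl_upset T A) hmeet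
  obtain ⟨c, hcC, hcA⟩ := hAz C z hC (dConv_of_meetsAll (famConv_biUnion_finD hq hDz) hCS) rfl
  exact hCA hcC hcA

lemma NConv.qsConv (hq : IsQuasicontinuousT T) {I : Type} {r : I → I → Prop} {xi : I → X} {x : X} (hx : NConv T r xi x) :
    QSConv T r xi x := by
  refine ⟨finD T x, (hq.2 x).1, fun A hA => ⟨hA.1, ?_⟩, (hq.2 x).2⟩
  obtain ⟨k, hk⟩ := hx _ (hq.1 _ (dirOpen_setOf_sWayBelow hq A)) hA.2
  exact ⟨k, fun i hi => (hk i hi).mem_upset⟩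

end Quasicontinuous

lemma QSConv.nConv {T : Set (Set X)} {I : Type} {r : I → I → Prop} {xi : I → X} {x : X}
    (hx : QSConv T r xi x) : NConv T r xi x := by
  obtain ⟨F, -, hF, hFx⟩ := hx
  intro U hU hxU
  obtain ⟨A, hA, hAU⟩ := hFx U hU hxU
  obtain ⟨-, k, hk⟩ := hF A hA
  exact ⟨k, fun i hi => hAU (hk i hi)⟩

theorem stmt13_general (X : Type) [TopologicalSpace X]
    (h : IsQuasicontinuousSpace X) :
    ∀ (I : Type) (r : I → I → Prop), DirIdx r → ∀ (xi : I → X) (x : X),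
      QSConv (opens X) r xi x ↔ NConv (opens X) r xi x :=
  fun _ _ _ _ _ => ⟨QSConv.nConv, NConv.qsConv h⟩

theorem stmt13 (X : Type) [TopologicalSpace X] [T0Space X]
    (h : IsQuasicontinuousSpace X) :
    ∀ (I : Type) (r : I → I → Prop), DirIdx r → ∀ (xi : I → X) (x : X),
      QSConv (opens X) r xi x ↔ NConv (opens X) r xi x :=
  stmt13_general X h

end Conv
end
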